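/- arXiv:1709.06966 — 3 statements merged into one kernel-verified Lean document; each statement's English description precedes it below -/
import Mathlib

section
/- Let θ₁ > 0, θ₂ ≥ 0 and β > 0 be such that β(θ₁ − θ₂ − 1) < 2 < β(3θ₁ − θ₂ − 1). Then the integral ∫₀^{∞} σ^{−2 + β(θ₁ − θ₂ − 1)/2} ( ∫_ℝ | (σ+1)^{−1/2} exp(−y²/(4(σ+1))) − exp(−y²/4) |^{θ₁} |y|^{θ₂} dy )^{β} dσ is finite. -/
/-!
Write `J σ` for the inner integral. For `σ ≤ 1`, comparing exponents gives
`|(σ+1)^(-1/2) e^(-y²/(4(σ+1))) - e^(-y²/4)| ≤ 4σ e^(-y²/16)`, so `J σ = O(σ^θ₁)` and the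
integrand is `O(σ^(-2 + β(3θ₁ - θ₂ - 1)/2))`, integrable at `0` because the exponent exceeds `-1`.
For `σ ≥ 1`, `|a - b|^θ₁ ≤ a^θ₁ + b^θ₁` and the scaling of Gaussian moments give
`J σ = O(σ^max κ 0)` with `κ = (θ₂ + 1 - θ₁)/2`; the resulting power of `σ` is below `-1`
thanks to `β(θ₁ - θ₂ - 1) < 2`.
-/

open MeasureTheory Real Filter

/-- The heat kernel on `ℝ`: `G t x = (4πt)^(-1/2) exp(-x²/(4t))`. -/
noncomputable def G (t x : ℝ) : ℝ :=
  (4 * Real.pi * t) ^ (-(1:ℝ)/2) * Real.exp (-x ^ 2 / (4 * t))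

open Set

theorem abs_exp_sub_exp_le (a c : ℝ) : |exp a - exp c| ≤ |a - c| * exp (max a c) := by
  wlog hca : c ≤ a generalizing a c
  · simpa only [abs_sub_comm, max_comm] using this c a (le_of_not_ge hca)
  have hexp : exp a - exp c = exp a * (1 - exp (c - a)) := by
    rw [mul_sub, ← exp_add, add_sub_cancel, mul_one]
  rw [abs_of_nonneg (sub_nonneg.2 (exp_le_exp.2 hca)), abs_of_nonneg (sub_nonneg.2 hca),
    max_eq_left hca, hexp, mul_comm]
  refine mul_le_mul_of_nonneg_right ?_ (exp_pos a).le
  linarith [add_one_le_exp (c - a)]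

theorem abs_sub_rpow_le_rpow_add_rpow {a b θ : ℝ} (ha : 0 ≤ a) (hb : 0 ≤ b) (hθ : 0 ≤ θ) :
    |a - b| ^ θ ≤ a ^ θ + b ^ θ := by
  rcases le_total a b with hab | hab
  · calc |a - b| ^ θ ≤ b ^ θ := by
          gcongr; rw [abs_sub_comm, abs_of_nonneg (sub_nonneg.2 hab)]; linarith
      _ ≤ a ^ θ + b ^ θ := le_add_of_nonneg_left (rpow_nonneg ha θ)
  · calc |a - b| ^ θ ≤ a ^ θ := by
          gcongr; rw [abs_of_nonneg (sub_nonneg.2 hab)]; linarith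
      _ ≤ a ^ θ + b ^ θ := le_add_of_nonneg_right (rpow_nonneg hb θ)

theorem norm_rpow_mul_rpow_le_of_le_mul_rpow {σ x A α β γ : ℝ} (hσ : 0 < σ) (hx : 0 ≤ x)
    (hβ : 0 ≤ β) (h : x ≤ A * σ ^ γ) : ‖σ ^ α * x ^ β‖ ≤ A ^ β * σ ^ (α + γ * β) := by
  have hA : 0 ≤ A := nonneg_of_mul_nonneg_left (hx.trans h) (rpow_pos_of_pos hσ γ)
  rw [norm_of_nonneg (by positivity)]
  calc σ ^ α * x ^ β ≤ σ ^ α * (A * σ ^ γ) ^ β := by gcongr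
    _ = A ^ β * σ ^ (α + γ * β) := by
      rw [mul_rpow hA (rpow_nonneg hσ.le γ), ← rpow_mul hσ.le, rpow_add hσ]
      ring

theorem add_one_rpow_add_one_le {σ : ℝ} (κ : ℝ) (hσ : 1 ≤ σ) :
    (σ + 1) ^ κ + 1 ≤ (2 ^ max κ 0 + 1) * σ ^ max κ 0 := by
  have hpow : (σ + 1) ^ κ ≤ 2 ^ max κ 0 * σ ^ max κ 0 := by
    rw [← mul_rpow zero_le_two (by linarith)]
    calc (σ + 1) ^ κ ≤ (σ + 1) ^ max κ 0 :=
          rpow_le_rpow_of_exponent_le (by linarith) (le_max_left κ 0)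
      _ ≤ (2 * σ) ^ max κ 0 := by gcongr; linarith
  have hone : 1 ≤ σ ^ max κ 0 := one_le_rpow hσ (le_max_right κ 0)
  linarith

theorem integrableOn_Ioi_zero_of_le_rpow {f : ℝ → ℝ}
    (hf : AEStronglyMeasurable f (volume.restrict (Ioi 0))) {C₀ C₁ p q : ℝ}
    (hp : -1 < p) (hq : q < -1) (h₀ : ∀ σ ∈ Ioc 0 1, ‖f σ‖ ≤ C₀ * σ ^ p)
    (h₁ : ∀ σ ∈ Ioi 1, ‖f σ‖ ≤ C₁ * σ ^ q) : IntegrableOn f (Ioi 0) := by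
  rw [← Ioc_union_Ioi_eq_Ioi zero_le_one]
  refine IntegrableOn.union ?_ ?_
  · refine Integrable.mono' (g := fun σ => C₀ * σ ^ p) ?_ (hf.mono_set Ioc_subset_Ioi_self)
      ((ae_restrict_iff' measurableSet_Ioc).2 (ae_of_all _ h₀))
    refine Integrable.const_mul ?_ C₀
    rw [← IntegrableOn, ← intervalIntegrable_iff_integrableOn_Ioc_of_le zero_le_one]
    exact intervalIntegral.intervalIntegrable_rpow' hp
  · exact Integrable.mono' ((integrableOn_Ioi_rpow_of_lt hq zero_lt_one).const_mul C₁)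
      (hf.mono_set (Ioi_subset_Ioi zero_le_one))
      ((ae_restrict_iff' measurableSet_Ioi).2 (ae_of_all _ h₁))

theorem integrable_abs_rpow_mul_exp_neg_mul_sq {b s : ℝ} (hb : 0 < b) (hs : -1 < s) :
    Integrable fun x : ℝ => |x| ^ s * exp (-b * x ^ 2) := by
  have hIoi : IntegrableOn (fun x : ℝ => |x| ^ s * exp (-b * x ^ 2)) (Ioi 0) :=
    (integrableOn_rpow_mul_exp_neg_mul_sq hb hs).congr_fun
      (fun x hx => by rw [abs_of_pos hx]) measurableSet_Ioi
  rw [← integrableOn_univ, ← Iio_union_Ici (a := (0 : ℝ)), integrableOn_union,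
    integrableOn_Ici_iff_integrableOn_Ioi]
  refine ⟨?_, hIoi⟩
  rw [← (Measure.measurePreserving_neg (volume : Measure ℝ)).integrableOn_comp_preimage
      (Homeomorph.neg ℝ).measurableEmbedding]
  simpa only [Function.comp_def, neg_sq, neg_preimage, neg_Iio, neg_zero, abs_neg] using hIoi

theorem integral_abs_rpow_mul_exp_neg_mul_sq {b s : ℝ} (hb : 0 < b) (hs : -1 < s) :
    ∫ x : ℝ, |x| ^ s * exp (-b * x ^ 2) = b ^ (-(s + 1) / 2) * Gamma ((s + 1) / 2) := by
  have hIoi := integral_rpow_mul_exp_neg_mul_rpow two_pos hs hb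
  have hsymm := integral_comp_abs (f := fun x => x ^ s * exp (-b * x ^ (2 : ℝ)))
  simp only [rpow_two, sq_abs] at hIoi hsymm
  rw [hsymm, hIoi]
  ring

theorem integral_abs_rpow_mul_exp_neg_div_mul_sq {b c s : ℝ} (hb : 0 < b) (hc : 0 < c)
    (hs : -1 < s) :
    ∫ x : ℝ, |x| ^ s * exp (-(c / b) * x ^ 2) =
      b ^ ((s + 1) / 2) * ∫ x : ℝ, |x| ^ s * exp (-c * x ^ 2) := by
  rw [integral_abs_rpow_mul_exp_neg_mul_sq (div_pos hc hb) hs,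
    integral_abs_rpow_mul_exp_neg_mul_sq hc hs, div_rpow hc.le hb.le, div_eq_mul_inv,
    ← rpow_neg hb.le, neg_div, neg_neg]
  ring

/-- `heatDiff σ y = √(4π) * (G (σ + 1) y - G 1 y)`. -/
noncomputable def heatDiff (σ y : ℝ) : ℝ :=
  (σ + 1) ^ (-(1:ℝ)/2) * exp (-y ^ 2 / (4 * (σ + 1))) - exp (-y ^ 2 / 4)

theorem abs_heatDiff_le {σ : ℝ} (y : ℝ) (hσ₀ : 0 ≤ σ) (hσ₁ : σ ≤ 1) :
    |heatDiff σ y| ≤ 4 * σ * exp (-y ^ 2 / 16) := by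
  set b := σ + 1 with hb_def
  have hb : 1 ≤ b := by linarith
  have hlog₀ : 0 ≤ log b := log_nonneg hb
  have hlog : log b ≤ σ := by linarith [log_le_sub_one_of_pos (zero_lt_one.trans_le hb)]
  set a := -(log b / 2) - y ^ 2 / (4 * b) with ha
  set c := -y ^ 2 / 4 with hc
  have hexp : heatDiff σ y = exp a - exp c := by
    rw [heatDiff, rpow_def_of_pos (zero_lt_one.trans_le hb), ← exp_add, ha, hc, hb_def]
    ring_nf
  have hgap : |a - c| ≤ σ * (1 / 2 + y ^ 2 / 4) := by
    have hu : y ^ 2 / 4 - y ^ 2 / (4 * b) = σ * y ^ 2 / (4 * b) := by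
      field_simp; ring
    have hu₀ : 0 ≤ σ * y ^ 2 / (4 * b) := by positivity
    have hu₁ : σ * y ^ 2 / (4 * b) ≤ σ * y ^ 2 / 4 :=
      div_le_div_of_nonneg_left (by positivity) (by norm_num) (by linarith)
    rw [abs_le]
    constructor <;> linarith [ha, hc]
  have hmax : max a c ≤ -y ^ 2 / 8 := by
    have : y ^ 2 / 8 ≤ y ^ 2 / (4 * b) :=
      div_le_div_of_nonneg_left (sq_nonneg y) (by positivity) (by linarith)
    refine max_le ?_ ?_ <;> linarith [sq_nonneg y, ha, hc]
  have hgauss : (1 / 2 + y ^ 2 / 4) * exp (-y ^ 2 / 8) ≤ 4 * exp (-y ^ 2 / 16) := by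
    have hpoly : 1 / 2 + y ^ 2 / 4 ≤ 4 * exp (y ^ 2 / 16) := by
      linarith [add_one_le_exp (y ^ 2 / 16)]
    calc (1 / 2 + y ^ 2 / 4) * exp (-y ^ 2 / 8) ≤ 4 * exp (y ^ 2 / 16) * exp (-y ^ 2 / 8) := by
          gcongr
      _ = 4 * exp (-y ^ 2 / 16) := by rw [mul_assoc, ← exp_add]; ring_nf
  calc |heatDiff σ y| ≤ |a - c| * exp (max a c) := hexp ▸ abs_exp_sub_exp_le a c
    _ ≤ σ * (1 / 2 + y ^ 2 / 4) * exp (-y ^ 2 / 8) := by gcongr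
    _ ≤ 4 * σ * exp (-y ^ 2 / 16) := by linarith [mul_le_mul_of_nonneg_left hgauss hσ₀]

theorem abs_heatDiff_rpow_le {σ θ : ℝ} (y : ℝ) (hσ : 0 ≤ σ) (hθ : 0 ≤ θ) :
    |heatDiff σ y| ^ θ ≤
      (σ + 1) ^ (-θ / 2) * exp (-(θ / 4 / (σ + 1)) * y ^ 2) + exp (-(θ / 4) * y ^ 2) := by
  have hb : 0 < σ + 1 := by linarith
  refine (abs_sub_rpow_le_rpow_add_rpow (by positivity) (exp_pos _).le hθ).trans_eq ?_
  rw [mul_rpow (by positivity) (exp_pos _).le, ← rpow_mul hb.le, ← exp_mul, ← exp_mul,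
    ← div_div]
  ring_nf

theorem integral_heatDiff_le_of_le_one {θ₁ θ₂ σ : ℝ} (hθ₁ : 0 < θ₁) (hθ₂ : -1 < θ₂)
    (hσ₀ : 0 ≤ σ) (hσ₁ : σ ≤ 1) :
    ∫ y, |heatDiff σ y| ^ θ₁ * |y| ^ θ₂ ≤
      (4 ^ θ₁ * ∫ y : ℝ, |y| ^ θ₂ * exp (-(θ₁ / 16) * y ^ 2)) * σ ^ θ₁ := by
  rw [mul_comm, ← mul_assoc, ← mul_rpow hσ₀ zero_le_four, mul_comm σ, ← integral_const_mul]
  refine integral_mono_of_nonneg (ae_of_all _ fun y => by positivity)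
    ((integrable_abs_rpow_mul_exp_neg_mul_sq (by positivity) hθ₂).const_mul _)
    (ae_of_all _ fun y => ?_)
  calc |heatDiff σ y| ^ θ₁ * |y| ^ θ₂ ≤ (4 * σ * exp (-y ^ 2 / 16)) ^ θ₁ * |y| ^ θ₂ := by
        gcongr; exact abs_heatDiff_le y hσ₀ hσ₁
    _ = (4 * σ) ^ θ₁ * (|y| ^ θ₂ * exp (-(θ₁ / 16) * y ^ 2)) := by
        rw [mul_rpow (by positivity) (exp_pos _).le, ← exp_mul]
        ring_nf

theorem integral_heatDiff_le {θ₁ θ₂ σ : ℝ} (hθ₁ : 0 < θ₁) (hθ₂ : -1 < θ₂) (hσ : 0 ≤ σ) :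
    ∫ y, |heatDiff σ y| ^ θ₁ * |y| ^ θ₂ ≤
      ((σ + 1) ^ ((θ₂ + 1 - θ₁) / 2) + 1) * ∫ y : ℝ, |y| ^ θ₂ * exp (-(θ₁ / 4) * y ^ 2) := by
  have hb : 0 < σ + 1 := by linarith
  have hint₁ := integrable_abs_rpow_mul_exp_neg_mul_sq (div_pos (div_pos hθ₁ four_pos) hb) hθ₂
  have hint₂ := integrable_abs_rpow_mul_exp_neg_mul_sq (div_pos hθ₁ four_pos) hθ₂
  have hbound : ∀ y : ℝ, |heatDiff σ y| ^ θ₁ * |y| ^ θ₂ ≤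
      (σ + 1) ^ (-θ₁ / 2) * (|y| ^ θ₂ * exp (-(θ₁ / 4 / (σ + 1)) * y ^ 2)) +
        |y| ^ θ₂ * exp (-(θ₁ / 4) * y ^ 2) := fun y => by
    calc |heatDiff σ y| ^ θ₁ * |y| ^ θ₂ ≤ ((σ + 1) ^ (-θ₁ / 2) *
          exp (-(θ₁ / 4 / (σ + 1)) * y ^ 2) + exp (-(θ₁ / 4) * y ^ 2)) * |y| ^ θ₂ := by
          gcongr; exact abs_heatDiff_rpow_le y hσ hθ₁.le
      _ = _ := by ring
  refine (integral_mono_of_nonneg (ae_of_all _ fun y => by positivity)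
    ((hint₁.const_mul _).add hint₂) (ae_of_all _ hbound)).trans_eq ?_
  rw [integral_add' (hint₁.const_mul _) hint₂, integral_const_mul,
    integral_abs_rpow_mul_exp_neg_div_mul_sq hb (div_pos hθ₁ four_pos) hθ₂, ← mul_assoc,
    ← rpow_add hb]
  ring_nf

theorem integral_heatDiff_le_of_one_le {θ₁ θ₂ σ : ℝ} (hθ₁ : 0 < θ₁) (hθ₂ : -1 < θ₂)
    (hσ : 1 ≤ σ) :
    ∫ y, |heatDiff σ y| ^ θ₁ * |y| ^ θ₂ ≤
      ((2 ^ max ((θ₂ + 1 - θ₁) / 2) 0 + 1) * ∫ y : ℝ, |y| ^ θ₂ * exp (-(θ₁ / 4) * y ^ 2)) *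
        σ ^ max ((θ₂ + 1 - θ₁) / 2) 0 := by
  have hM : 0 ≤ ∫ y : ℝ, |y| ^ θ₂ * exp (-(θ₁ / 4) * y ^ 2) :=
    integral_nonneg fun y => by positivity
  refine (integral_heatDiff_le hθ₁ hθ₂ (zero_le_one.trans hσ)).trans ?_
  exact (mul_le_mul_of_nonneg_right (add_one_rpow_add_one_le _ hσ) hM).trans_eq (by ring)

theorem measurable_integral_heatDiff (θ₁ θ₂ : ℝ) :
    Measurable fun σ => ∫ y, |heatDiff σ y| ^ θ₁ * |y| ^ θ₂ :=
  (StronglyMeasurable.integral_prod_right'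
    (f := fun p : ℝ × ℝ => |heatDiff p.1 p.2| ^ θ₁ * |p.2| ^ θ₂)
    (Measurable.stronglyMeasurable (by unfold heatDiff; fun_prop))).measurable

theorem scale_invariant_integral_finite
    (θ₁ θ₂ β : ℝ) (hθ₁ : 0 < θ₁) (hθ₂ : 0 ≤ θ₂) (hβ : 0 < β)
    (h1 : β * (θ₁ - θ₂ - 1) < 2) (h2 : 2 < β * (3 * θ₁ - θ₂ - 1)) :
    MeasureTheory.IntegrableOn
      (fun σ : ℝ => σ ^ (-2 + β * (θ₁ - θ₂ - 1) / 2) *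
        (∫ y : ℝ,
          |(σ + 1) ^ (-(1:ℝ)/2) * Real.exp (-y ^ 2 / (4 * (σ + 1)))
            - Real.exp (-y ^ 2 / 4)| ^ θ₁ * |y| ^ θ₂) ^ β)
      (Set.Ioi (0:ℝ)) := by
  have hθ₂' : -1 < θ₂ := by linarith
  have hJ_meas := measurable_integral_heatDiff θ₁ θ₂
  have hJ_nonneg (σ : ℝ) : 0 ≤ ∫ y, |heatDiff σ y| ^ θ₁ * |y| ^ θ₂ :=
    integral_nonneg fun y => by positivity
  change IntegrableOn (fun σ => σ ^ (-2 + β * (θ₁ - θ₂ - 1) / 2) *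
    (∫ y, |heatDiff σ y| ^ θ₁ * |y| ^ θ₂) ^ β) (Ioi 0)
  refine integrableOn_Ioi_zero_of_le_rpow (by fun_prop) (by nlinarith) ?_
    (fun σ hσ => norm_rpow_mul_rpow_le_of_le_mul_rpow hσ.1 (hJ_nonneg σ) hβ.le
      (integral_heatDiff_le_of_le_one hθ₁ hθ₂' hσ.1.le hσ.2))
    (fun σ hσ => norm_rpow_mul_rpow_le_of_le_mul_rpow (zero_lt_one.trans hσ) (hJ_nonneg σ) hβ.le
      (integral_heatDiff_le_of_one_le hθ₁ hθ₂' hσ.le))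
  rcases max_cases ((θ₂ + 1 - θ₁) / 2) 0 with ⟨hκ, _⟩ | ⟨hκ, _⟩ <;> rw [hκ] <;> nlinarith
end

section
/- Let p₁ > 4 and T > 0. Then there exists a constant C, depending only on p₁ and T, such that for all 0 < t₁ < t₂ ≤ T one has ∫₀^{t₁} ∫_ℝ |G_{t₂−s}(z) − G_{t₁−s}(z)| dz ds ≤ C (t₂ − t₁)^{1/2 + 1/p₁}. -/
open MeasureTheory Real Filter

/-! For `0 < t ≤ t'` the L¹ distance between `G t'` and `G t` is at most `2`, both being
probability densities, and at most `(t' - t) / t`: `G t' - G t` splits into a change of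
normalisation and a change of the Gaussian factor, each of constant sign, with explicit integrals.
Interpolating gives `2 (t' - t)^θ t^(-θ)` with `θ = 1/2 + 1/p₁ < 1`, and `(t₁ - s)^(-θ)` is
integrable on `(0, t₁)`. -/

open Set

lemma exp_neg_sq_div_eq (c x : ℝ) : exp (-x ^ 2 / c) = exp (-c⁻¹ * x ^ 2) := by
  rw [neg_div, div_eq_inv_mul, neg_mul]

lemma integrable_exp_neg_sq_div {c : ℝ} (hc : 0 < c) :
    Integrable (fun x : ℝ => exp (-x ^ 2 / c)) := by
  simpa only [exp_neg_sq_div_eq] using integrable_exp_neg_mul_sq (inv_pos.2 hc)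

lemma integral_exp_neg_sq_div (c : ℝ) : ∫ x : ℝ, exp (-x ^ 2 / c) = √(π * c) := by
  simp only [exp_neg_sq_div_eq, integral_gaussian, div_inv_eq_mul]

lemma exp_neg_sq_div_le_of_le {c c' : ℝ} (hc : 0 < c) (hcc' : c ≤ c') (x : ℝ) :
    exp (-x ^ 2 / c) ≤ exp (-x ^ 2 / c') := by
  simp only [neg_div, exp_le_exp, neg_le_neg_iff]
  gcongr

lemma G_eq_inv_sqrt_mul_exp {t : ℝ} (ht : 0 < t) (x : ℝ) :
    G t x = (√(π * (4 * t)))⁻¹ * exp (-x ^ 2 / (4 * t)) := by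
  rw [G, mul_left_comm, ← mul_assoc, sqrt_eq_rpow, ← rpow_neg (by positivity), neg_div]

lemma G_nonneg {t : ℝ} (ht : 0 < t) (x : ℝ) : 0 ≤ G t x := by
  rw [G_eq_inv_sqrt_mul_exp ht]
  positivity

lemma integrable_G {t : ℝ} (ht : 0 < t) : Integrable (G t) :=
  (integrable_exp_neg_sq_div (by positivity : 0 < 4 * t)).const_mul _

lemma integral_G {t : ℝ} (ht : 0 < t) : ∫ x : ℝ, G t x = 1 := by
  rw [integral_congr_ae (.of_forall (G_eq_inv_sqrt_mul_exp ht)), integral_const_mul,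
    integral_exp_neg_sq_div]
  exact inv_mul_cancel₀ (by positivity)

section L1Distance

variable {α : Type*} [MeasurableSpace α] {μ : Measure α} {f g : α → ℝ}

lemma integral_abs_sub_le_integral_add (hf : Integrable f μ) (hg : Integrable g μ)
    (hf0 : 0 ≤ f) (hg0 : 0 ≤ g) : ∫ x, |f x - g x| ∂μ ≤ ∫ x, f x ∂μ + ∫ x, g x ∂μ := by
  rw [← integral_add hf hg]
  exact integral_mono (hf.sub hg).abs (hf.add hg) fun x =>
    (abs_sub _ _).trans_eq (by rw [abs_of_nonneg (hf0 x), abs_of_nonneg (hg0 x)])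

lemma integral_abs_mul_sub_mul_le (hf : Integrable f μ) (hg : Integrable g μ) (hf0 : 0 ≤ f)
    (hfg : f ≤ g) {a b : ℝ} (ha : 0 ≤ a) (hba : b ≤ a) :
    ∫ x, |b * g x - a * f x| ∂μ ≤ (a - b) * ∫ x, g x ∂μ + a * (∫ x, g x ∂μ - ∫ x, f x ∂μ) := by
  have hg' := hg.const_mul (a - b)
  have hgf : Integrable (fun x => a * (g x - f x)) μ := (hg.sub hf).const_mul a
  calc ∫ x, |b * g x - a * f x| ∂μ ≤ ∫ x, ((a - b) * g x + a * (g x - f x)) ∂μ := by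
        refine integral_mono ((hg.const_mul b).sub (hf.const_mul a)).abs (hg'.add hgf)
          fun x => abs_le.2 ⟨?_, ?_⟩
        · nlinarith [mul_nonneg ha (sub_nonneg.2 (hfg x))]
        · nlinarith [mul_nonneg (sub_nonneg.2 hba) ((hf0 x).trans (hfg x))]
    _ = (a - b) * ∫ x, g x ∂μ + a * (∫ x, g x ∂μ - ∫ x, f x ∂μ) := by
        rw [integral_add hg' hgf, integral_const_mul, integral_const_mul, integral_sub hg hf]

end L1Distance

lemma integral_abs_G_sub_G_le_two {t t' : ℝ} (ht : 0 < t) (ht' : 0 < t') :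
    ∫ z, |G t' z - G t z| ≤ 2 := by
  have h := integral_abs_sub_le_integral_add (integrable_G ht') (integrable_G ht) (G_nonneg ht')
    (G_nonneg ht)
  rwa [integral_G ht, integral_G ht', one_add_one_eq_two] at h

lemma integral_abs_G_sub_G_le_div {t t' : ℝ} (ht : 0 < t) (htt' : t ≤ t') :
    ∫ z, |G t' z - G t z| ≤ (t' - t) / t := by
  have ht' := ht.trans_le htt'
  have hAB : √(π * (4 * t)) ≤ √(π * (4 * t')) := by gcongr
  have h := integral_abs_mul_sub_mul_le (integrable_exp_neg_sq_div (by positivity : 0 < 4 * t))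
    (integrable_exp_neg_sq_div (by positivity : 0 < 4 * t')) (fun x => (exp_pos _).le)
    (exp_neg_sq_div_le_of_le (by positivity) (by linarith)) (inv_nonneg.2 (sqrt_nonneg _))
    (inv_anti₀ (by positivity) hAB)
  simp only [← G_eq_inv_sqrt_mul_exp ht, ← G_eq_inv_sqrt_mul_exp ht', integral_exp_neg_sq_div]
    at h
  refine h.trans ?_
  set A := √(π * (4 * t))
  set B := √(π * (4 * t'))
  have hA : 0 < A := by positivity
  have hB : 0 < B := by positivity
  have hA2 : A ^ 2 = π * (4 * t) := sq_sqrt (by positivity)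
  have hB2 : B ^ 2 = π * (4 * t') := sq_sqrt (by positivity)
  have hratio : (t' - t) / t = (B ^ 2 - A ^ 2) / A ^ 2 := by
    rw [hA2, hB2]
    field_simp
  have hsq : (B ^ 2 - A ^ 2) / A ^ 2 - ((A⁻¹ - B⁻¹) * B + A⁻¹ * (B - A)) = ((B - A) / A) ^ 2 := by
    field_simp
    ring
  rw [hratio, ← sub_nonneg, hsq]
  positivity

lemma le_rpow_mul_rpow_of_le_of_le {I A B θ : ℝ} (hI : 0 ≤ I) (hA : I ≤ A) (hB : I ≤ B)
    (hθ0 : 0 ≤ θ) (hθ1 : θ ≤ 1) : I ≤ A ^ (1 - θ) * B ^ θ :=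
  calc I = I ^ (1 - θ) * I ^ θ := by rw [← rpow_add' hI (by norm_num), sub_add_cancel, rpow_one]
    _ ≤ A ^ (1 - θ) * B ^ θ := mul_le_mul (rpow_le_rpow hI hA (by linarith))
        (rpow_le_rpow hI hB hθ0) (by positivity) (rpow_nonneg (hI.trans hA) _)

lemma integral_abs_G_sub_G_le_rpow {t t' θ : ℝ} (ht : 0 < t) (htt' : t ≤ t') (hθ0 : 0 ≤ θ)
    (hθ1 : θ ≤ 1) : ∫ z, |G t' z - G t z| ≤ 2 * (t' - t) ^ θ * t ^ (-θ) :=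
  calc ∫ z, |G t' z - G t z| ≤ 2 ^ (1 - θ) * ((t' - t) / t) ^ θ :=
        le_rpow_mul_rpow_of_le_of_le (integral_nonneg fun _ => abs_nonneg _)
          (integral_abs_G_sub_G_le_two ht (ht.trans_le htt')) (integral_abs_G_sub_G_le_div ht htt')
          hθ0 hθ1
    _ ≤ 2 * ((t' - t) / t) ^ θ := by
        gcongr
        exact (rpow_le_rpow_of_exponent_le one_le_two (by linarith)).trans_eq (rpow_one 2)
    _ = 2 * (t' - t) ^ θ * t ^ (-θ) := by
        rw [div_rpow (sub_nonneg.2 htt') ht.le, rpow_neg ht.le]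
        ring

lemma intervalIntegrable_sub_rpow (t : ℝ) {r : ℝ} (hr : -1 < r) :
    IntervalIntegrable (fun s => (t - s) ^ r) volume 0 t := by
  simpa only [sub_self, sub_zero] using
    (intervalIntegral.intervalIntegrable_rpow' hr (a := t) (b := 0)).comp_sub_left t

lemma integral_sub_rpow (t : ℝ) {r : ℝ} (hr : -1 < r) :
    ∫ s in (0 : ℝ)..t, (t - s) ^ r = t ^ (r + 1) / (r + 1) := by
  rw [intervalIntegral.integral_comp_sub_left (fun x => x ^ r), sub_self, sub_zero,
    integral_rpow (.inl hr), zero_rpow (by linarith), sub_zero]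

lemma intervalIntegral_mono_of_nonneg_of_le_Ioo {μ : Measure ℝ} [NullSingletonClass μ]
    {f g : ℝ → ℝ} {a b : ℝ} (hab : a ≤ b) (hf : ∀ x ∈ Ioo a b, 0 ≤ f x)
    (hg : IntervalIntegrable g μ a b) (hfg : ∀ x ∈ Ioo a b, f x ≤ g x) : ∫ x in a..b, f x ∂μ ≤ ∫ x in a..b, g x ∂μ := by
  simp only [intervalIntegral.integral_of_le hab, integral_Ioc_eq_integral_Ioo]
  exact integral_mono_of_nonneg (ae_restrict_of_forall_mem measurableSet_Ioo hf)
    (hg.1.mono_set Ioo_subset_Ioc_self) (ae_restrict_of_forall_mem measurableSet_Ioo hfg)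

theorem heat_kernel_time_increment_L1
    (p₁ T : ℝ) (hp : 4 < p₁) (hT : 0 < T) :
    ∃ C : ℝ, 0 < C ∧ ∀ t₁ t₂ : ℝ, 0 < t₁ → t₁ < t₂ → t₂ ≤ T →
      ∫ s in (0:ℝ)..t₁, ∫ z : ℝ, |G (t₂ - s) z - G (t₁ - s) z|
        ≤ C * (t₂ - t₁) ^ ((1:ℝ)/2 + 1/p₁) := by
  set θ : ℝ := 1 / 2 + 1 / p₁ with hθ
  have hθ0 : 0 ≤ θ := by
    have : 0 < p₁ := by linarith
    positivity
  have hθ1 : 0 < 1 - θ := by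
    have : 1 / p₁ < 1 / 4 := by gcongr
    linarith
  have hr : -1 < -θ := by linarith
  refine ⟨2 * T ^ (1 - θ) / (1 - θ), by positivity, fun t₁ t₂ h₁ h₁₂ h₂ => ?_⟩
  calc ∫ s in (0:ℝ)..t₁, ∫ z, |G (t₂ - s) z - G (t₁ - s) z|
      ≤ ∫ s in (0:ℝ)..t₁, 2 * (t₂ - t₁) ^ θ * (t₁ - s) ^ (-θ) :=
        intervalIntegral_mono_of_nonneg_of_le_Ioo h₁.le
          (fun _ _ => integral_nonneg fun _ => abs_nonneg _)
          ((intervalIntegrable_sub_rpow t₁ hr).const_mul _) fun s hs => by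
            simpa only [sub_sub_sub_cancel_right] using
              integral_abs_G_sub_G_le_rpow (sub_pos.2 hs.2) (by linarith : t₁ - s ≤ t₂ - s) hθ0
                (by linarith)
    _ = 2 * (t₂ - t₁) ^ θ * (t₁ ^ (1 - θ) / (1 - θ)) := by
        rw [intervalIntegral.integral_const_mul, integral_sub_rpow t₁ hr, neg_add_eq_sub]
    _ ≤ 2 * (t₂ - t₁) ^ θ * (T ^ (1 - θ) / (1 - θ)) := by gcongr; linarith
    _ = 2 * T ^ (1 - θ) / (1 - θ) * (t₂ - t₁) ^ θ := by ring
end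

section
/- Let q₁ ≥ 1. Then there exists a constant C, depending only on q₁, such that for all 0 < t₁ < t₂ one has ∫₀^{t₁} ( ∫_ℝ |G_{t₂−s}(x) − G_{t₁−s}(x)|^{2q₁} dx )^{1/q₁} ds ≤ C (t₂ − t₁)^{1/(2q₁)}. -/
/-!
Write `p = 2 q₁`, `δ = t₂ - t₁` and `b = t₁ - s`. Since `∫ G_t^p = (4πt)^((1-p)/2) / √p`, the
crude bound `|G_{b+δ} - G_b|^p ≤ G_{b+δ}^p + G_b^p` gives `‖G_{b+δ} - G_b‖_p^2 ≲ b^(1/p - 1)`,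
which is integrable at `b = 0`. For `b ≥ δ` the mean value theorem together with
`|∂_τ G_τ| ≲ b⁻¹ G_{4b}` on `[b, 2b]` gives the better bound `δ² b^(1/p - 3)`, integrable at
infinity. Integrating the first bound over `b < δ` and the second over `b > δ` each yields
a multiple of `δ^(1/p)`.
-/

open MeasureTheory Real Filter

open Set

lemma abs_sub_rpow_le_rpow_add_rpow_s6 {u v p : ℝ} (hu : 0 ≤ u) (hv : 0 ≤ v) (hp : 0 ≤ p) :
    |u - v| ^ p ≤ u ^ p + v ^ p := by
  rcases le_total u v with h | h
  · rw [abs_of_nonpos (by linarith), neg_sub]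
    have := rpow_le_rpow (by linarith) (show v - u ≤ v by linarith) hp
    linarith [rpow_nonneg hu p]
  · rw [abs_of_nonneg (by linarith)]
    have := rpow_le_rpow (by linarith) (show u - v ≤ u by linarith) hp
    linarith [rpow_nonneg hv p]

lemma intervalIntegral_le_of_le_rpow_of_le_rpow {f : ℝ → ℝ} {A B α δ T : ℝ} (hα₀ : -1 < α)
    (hα₁ : α < 1) (hδ : 0 < δ) (hT : 0 ≤ T) (hf : ∀ b, 0 < b → 0 ≤ f b)
    (hA : ∀ b, 0 < b → f b ≤ A * b ^ α) (hB : ∀ b, δ ≤ b → f b ≤ B * δ ^ 2 * b ^ (α - 2)) :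
    ∫ b in 0..T, f b ≤ (A / (α + 1) + B / (1 - α)) * δ ^ (α + 1) := by
  set g : ℝ → ℝ := fun b ↦ if b ≤ δ then A * b ^ α else B * δ ^ 2 * b ^ (α - 2)
  have hfg : ∀ b, 0 < b → f b ≤ g b := by
    intro b hb
    by_cases h : b ≤ δ
    · simpa only [g, if_pos h] using hA b hb
    · simpa only [g, if_neg h] using hB b (not_le.1 h).le
  have hg₁ : IntegrableOn g (Ioc 0 δ) :=
    IntegrableOn.congr_fun ((intervalIntegral.intervalIntegrable_rpow' hα₀).1.const_mul A)
      (fun b hb ↦ (if_pos hb.2).symm) measurableSet_Ioc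
  have hg₂ : IntegrableOn g (Ioi δ) :=
    IntegrableOn.congr_fun
      ((integrableOn_Ioi_rpow_of_lt (a := α - 2) (by linarith) hδ).const_mul (B * δ ^ 2))
      (fun b hb ↦ (if_neg (not_le.2 hb)).symm) measurableSet_Ioi
  have hg : IntegrableOn g (Ioi 0) := Ioc_union_Ioi_eq_Ioi hδ.le ▸ hg₁.union hg₂
  calc ∫ b in 0..T, f b = ∫ b in Ioc 0 T, f b := intervalIntegral.integral_of_le hT
    _ ≤ ∫ b in Ioc 0 T, g b := by
        refine integral_mono_of_nonneg ?_ (hg.mono_set Ioc_subset_Ioi_self) ?_ <;>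
          filter_upwards [ae_restrict_mem measurableSet_Ioc] with b hb
        exacts [hf b hb.1, hfg b hb.1]
    _ ≤ ∫ b in Ioi 0, g b := by
        refine setIntegral_mono_set hg ?_ Ioc_subset_Ioi_self.eventuallyLE
        filter_upwards [ae_restrict_mem measurableSet_Ioi] with b hb
        exact (hf b hb).trans (hfg b hb)
    _ = (∫ b in Ioc 0 δ, A * b ^ α) + ∫ b in Ioi δ, B * δ ^ 2 * b ^ (α - 2) := by
        rw [← Ioc_union_Ioi_eq_Ioi hδ.le,
          setIntegral_union (Ioc_disjoint_Ioi le_rfl) measurableSet_Ioi hg₁ hg₂]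
        congr 1
        · exact setIntegral_congr_fun measurableSet_Ioc fun b hb ↦ if_pos hb.2
        · exact setIntegral_congr_fun measurableSet_Ioi fun b hb ↦ if_neg (not_le.2 hb)
    _ = (A / (α + 1) + B / (1 - α)) * δ ^ (α + 1) := by
        rw [integral_const_mul, integral_const_mul, ← intervalIntegral.integral_of_le hδ.le,
          integral_rpow (Or.inl hα₀), integral_Ioi_rpow_of_lt (by linarith) hδ,
          zero_rpow (by linarith), show α - 2 + 1 = α + 1 - 2 by ring, rpow_sub hδ, rpow_two]
        have : α + 1 - 2 ≠ 0 := by linarith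
        have : 1 - α ≠ 0 := by linarith
        have : α + 1 ≠ 0 := by linarith
        field_simp
        ring

lemma G_pos {t : ℝ} (ht : 0 < t) (x : ℝ) : 0 < G t x := by
  unfold G; positivity

lemma G_rpow {p t : ℝ} (ht : 0 < t) (x : ℝ) :
    G t x ^ p = (4 * π * t) ^ (-p / 2) * exp (-(p / (4 * t)) * x ^ 2) := by
  have h : 0 ≤ 4 * π * t := by positivity
  rw [G, mul_rpow (by positivity) (exp_nonneg _), ← rpow_mul h, ← exp_mul]
  congr 2 <;> field_simp

lemma integrable_G_rpow {p t : ℝ} (hp : 0 < p) (ht : 0 < t) :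
    Integrable fun x ↦ G t x ^ p := by
  simp_rw [G_rpow ht]
  exact (integrable_exp_neg_mul_sq (by positivity)).const_mul _

lemma integral_G_rpow {p t : ℝ} (hp : 0 < p) (ht : 0 < t) :
    ∫ x, G t x ^ p = (4 * π * t) ^ ((1 - p) / 2) / √p := by
  have h : 0 < 4 * π * t := by positivity
  simp_rw [G_rpow ht]
  rw [integral_const_mul, integral_gaussian, show π / (p / (4 * t)) = 4 * π * t / p by
    field_simp, sqrt_div' _ hp.le, sqrt_eq_rpow, mul_div_assoc', ← rpow_add h]
  ring_nf

lemma integral_abs_G_sub_G_rpow_le {p a b : ℝ} (hp : 1 ≤ p) (hb : 0 < b) (hba : b ≤ a) :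
    ∫ x, |G a x - G b x| ^ p ≤ 2 / √p * (4 * π * b) ^ ((1 - p) / 2) := by
  have ha := hb.trans_le hba
  have hp0 : 0 < p := by linarith
  calc ∫ x, |G a x - G b x| ^ p ≤ ∫ x, (G a x ^ p + G b x ^ p) :=
        integral_mono_of_nonneg (.of_forall fun x ↦ by positivity)
          ((integrable_G_rpow hp0 ha).add (integrable_G_rpow hp0 hb))
          (.of_forall fun x ↦
            abs_sub_rpow_le_rpow_add_rpow_s6 (G_pos ha x).le (G_pos hb x).le hp0.le)
    _ = (4 * π * a) ^ ((1 - p) / 2) / √p + (4 * π * b) ^ ((1 - p) / 2) / √p := by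
        rw [integral_add (integrable_G_rpow hp0 ha) (integrable_G_rpow hp0 hb),
          integral_G_rpow hp0 ha, integral_G_rpow hp0 hb]
    _ ≤ 2 / √p * (4 * π * b) ^ ((1 - p) / 2) := by
        have : (4 * π * a) ^ ((1 - p) / 2) ≤ (4 * π * b) ^ ((1 - p) / 2) :=
          rpow_le_rpow_of_nonpos (by positivity) (by gcongr) (by linarith)
        have : 0 < √p := sqrt_pos.2 hp0
        rw [← add_div, div_mul_eq_mul_div]
        gcongr
        linarith

noncomputable def dtG (t x : ℝ) : ℝ :=
  G t x * (x ^ 2 / (4 * t ^ 2) - 1 / (2 * t))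

lemma hasDerivAt_G (x : ℝ) {t : ℝ} (ht : 0 < t) :
    HasDerivAt (fun τ ↦ G τ x) (dtG t x) t := by
  have h4πt : 0 < 4 * π * t := by positivity
  have hpow : HasDerivAt (fun τ ↦ (4 * π * τ) ^ (-(1:ℝ)/2))
      (-(1:ℝ)/2 * (4 * π * t) ^ (-(1:ℝ)/2 - 1) * (4 * π)) t :=
    (hasDerivAt_rpow_const (Or.inl h4πt.ne')).comp t ((hasDerivAt_id t).const_mul (4 * π)
      |>.congr_deriv (mul_one _))
  have hexp := ((hasDerivAt_inv ht.ne').const_mul (-x ^ 2 / 4)).exp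
  have hG : (fun τ ↦ G τ x) = fun τ ↦ (4 * π * τ) ^ (-(1:ℝ)/2) * exp (-x ^ 2 / 4 * τ⁻¹) := by
    funext τ; unfold G; ring_nf
  rw [hG]
  refine (hpow.mul hexp).congr_deriv ?_
  unfold dtG G
  rw [rpow_sub h4πt, rpow_one]
  field_simp
  ring

lemma G_le_mul_G_four_mul {b τ : ℝ} (hb : 0 < b) (hbτ : b ≤ τ) (hτb : τ ≤ 2 * b) (x : ℝ) :
    G τ x ≤ 2 * G (4 * b) x * exp (-x ^ 2 / (16 * b)) := by
  have hτ := hb.trans_le hbτ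
  have hprefactor : (4 * π * τ) ^ (-(1:ℝ)/2) ≤ 2 * (4 * π * (4 * b)) ^ (-(1:ℝ)/2) := by
    have h4 : (4:ℝ) ^ (-(1:ℝ)/2) = 1 / 2 := by
      rw [show (4:ℝ) = 2 ^ (2:ℝ) by norm_num, ← rpow_mul (by norm_num)]; norm_num
    rw [show 4 * π * (4 * b) = 4 * (4 * π * b) by ring,
      mul_rpow (x := 4) (by norm_num) (by positivity), h4, ← mul_assoc,
      mul_one_div_cancel two_ne_zero, one_mul]
    exact rpow_le_rpow_of_nonpos (by positivity) (by gcongr) (by norm_num)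
  have hexp :
      exp (-x ^ 2 / (4 * τ)) ≤ exp (-x ^ 2 / (4 * (4 * b))) * exp (-x ^ 2 / (16 * b)) := by
    rw [← exp_add, exp_le_exp, show -x ^ 2 / (4 * (4 * b)) + -x ^ 2 / (16 * b)
      = -x ^ 2 / (4 * (2 * b)) by ring, neg_div, neg_div, neg_le_neg_iff]
    gcongr
  calc G τ x ≤ 2 * (4 * π * (4 * b)) ^ (-(1:ℝ)/2) *
        (exp (-x ^ 2 / (4 * (4 * b))) * exp (-x ^ 2 / (16 * b))) := by
        unfold G; gcongr
    _ = 2 * G (4 * b) x * exp (-x ^ 2 / (16 * b)) := by unfold G; ring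

lemma abs_dtG_le {b τ : ℝ} (hb : 0 < b) (hbτ : b ≤ τ) (hτb : τ ≤ 2 * b) (x : ℝ) :
    |dtG τ x| ≤ 9 / b * G (4 * b) x := by
  have hτ := hb.trans_le hbτ
  have hfactor : |x ^ 2 / (4 * τ ^ 2) - 1 / (2 * τ)| ≤ x ^ 2 / (4 * b ^ 2) + 1 / (2 * b) := by
    have : x ^ 2 / (4 * τ ^ 2) ≤ x ^ 2 / (4 * b ^ 2) := by gcongr
    have : 1 / (2 * τ) ≤ 1 / (2 * b) := by gcongr
    have : 0 ≤ x ^ 2 / (4 * τ ^ 2) := by positivity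
    have : 0 ≤ 1 / (2 * τ) := by positivity
    rw [abs_sub_le_iff]; constructor <;> linarith
  -- with `z = x²/(16b)`, the Gaussian factor absorbs the polynomial one since `z e^{-z} ≤ 1`
  have hgauss : (x ^ 2 / (4 * b ^ 2) + 1 / (2 * b)) * exp (-x ^ 2 / (16 * b)) ≤ 9 / (2 * b) := by
    set z := x ^ 2 / (16 * b)
    have hz : z ≤ exp z := by linarith [add_one_le_exp z]
    have hz' : z * exp (-z) ≤ 1 := by
      rw [exp_neg, ← div_eq_mul_inv, div_le_one (exp_pos z)]; exact hz
    rw [show x ^ 2 / (4 * b ^ 2) + 1 / (2 * b) = (4 * z + 1 / 2) / b by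
        simp only [z]; field_simp; ring,
      show -x ^ 2 / (16 * b) = -z by ring, div_mul_eq_mul_div, div_le_div_iff₀ hb (by positivity)]
    nlinarith [exp_pos (-z), exp_le_one_iff.2 (neg_nonpos.2 (by positivity : 0 ≤ z))]
  calc |dtG τ x|
      ≤ 2 * G (4 * b) x * exp (-x ^ 2 / (16 * b)) * (x ^ 2 / (4 * b ^ 2) + 1 / (2 * b)) := by
        rw [dtG, abs_mul, abs_of_pos (G_pos hτ x)]
        exact mul_le_mul (G_le_mul_G_four_mul hb hbτ hτb x) hfactor (abs_nonneg _)
          (by have := G_pos (show 0 < 4 * b by positivity) x; positivity)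
    _ ≤ 2 * G (4 * b) x * (9 / (2 * b)) := by
        rw [mul_assoc _ (exp _), mul_comm (exp _)]
        have := G_pos (show 0 < 4 * b by positivity) x
        gcongr
    _ = 9 / b * G (4 * b) x := by field_simp

lemma abs_G_sub_G_le {a b : ℝ} (hb : 0 < b) (hba : b ≤ a) (hab : a ≤ 2 * b) (x : ℝ) :
    |G a x - G b x| ≤ 9 / b * G (4 * b) x * (a - b) := by
  simpa [← Real.norm_eq_abs] using norm_image_sub_le_of_norm_deriv_le_segment'
    (fun τ hτ ↦ (hasDerivAt_G x (hb.trans_le hτ.1)).hasDerivWithinAt)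
    (fun τ hτ ↦ abs_dtG_le hb hτ.1 (hτ.2.le.trans hab) x) a ⟨hba, le_rfl⟩

lemma integral_abs_G_sub_G_rpow_le_of_le_two_mul {p a b : ℝ} (hp : 0 < p) (hb : 0 < b)
    (hba : b ≤ a) (hab : a ≤ 2 * b) :
    ∫ x, |G a x - G b x| ^ p ≤
      (9 * (a - b) / b) ^ p * ((4 * π * (4 * b)) ^ ((1 - p) / 2) / √p) := by
  have h4b : 0 < 4 * b := by positivity
  rw [← integral_G_rpow hp h4b, ← integral_const_mul]
  refine integral_mono_of_nonneg (.of_forall fun x ↦ by positivity)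
    ((integrable_G_rpow hp h4b).const_mul _) (.of_forall fun x ↦ ?_)
  calc |G a x - G b x| ^ p ≤ (9 * (a - b) / b * G (4 * b) x) ^ p := by
        gcongr
        exact (abs_G_sub_G_le hb hba hab x).trans_eq (by ring)
    _ = (9 * (a - b) / b) ^ p * G (4 * b) x ^ p :=
        mul_rpow (by have := sub_nonneg.2 hba; positivity) (G_pos h4b x).le

lemma exists_rpow_integral_abs_G_add_sub_G_le {q : ℝ} (hq : 1 / 2 ≤ q) :
    ∃ K > 0, ∀ b δ : ℝ, 0 < b → 0 ≤ δ →
      (∫ x, |G (b + δ) x - G b x| ^ (2 * q)) ^ (1 / q) ≤ K * b ^ (1 / (2 * q) - 1) := by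
  have hq0 : 0 < q := by linarith
  refine ⟨(2 / √(2 * q) * (4 * π) ^ ((1 - 2 * q) / 2)) ^ (1 / q), by positivity,
    fun b δ hb hδ ↦ ?_⟩
  calc (∫ x, |G (b + δ) x - G b x| ^ (2 * q)) ^ (1 / q)
      ≤ (2 / √(2 * q) * (4 * π) ^ ((1 - 2 * q) / 2) * b ^ ((1 - 2 * q) / 2)) ^ (1 / q) := by
        gcongr
        rw [mul_assoc, ← mul_rpow (by positivity) hb.le]
        exact integral_abs_G_sub_G_rpow_le (by linarith) hb (by linarith)
    _ = (2 / √(2 * q) * (4 * π) ^ ((1 - 2 * q) / 2)) ^ (1 / q) * b ^ (1 / (2 * q) - 1) := by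
        rw [mul_rpow (by positivity) (by positivity), ← rpow_mul hb.le]
        congr 2
        field_simp

lemma exists_rpow_integral_abs_G_add_sub_G_le_of_le {q : ℝ} (hq : 0 < q) :
    ∃ K > 0, ∀ b δ : ℝ, 0 < δ → δ ≤ b →
      (∫ x, |G (b + δ) x - G b x| ^ (2 * q)) ^ (1 / q) ≤ K * δ ^ 2 * b ^ (1 / (2 * q) - 3) := by
  refine ⟨(9 ^ (2 * q) * (16 * π) ^ ((1 - 2 * q) / 2) / √(2 * q)) ^ (1 / q), by positivity,
    fun b δ hδ hδb ↦ ?_⟩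
  have hb := hδ.trans_le hδb
  calc (∫ x, |G (b + δ) x - G b x| ^ (2 * q)) ^ (1 / q)
      ≤ (9 ^ (2 * q) * (16 * π) ^ ((1 - 2 * q) / 2) / √(2 * q) * (δ ^ (2 * q) *
          b ^ ((1 - 6 * q) / 2))) ^ (1 / q) := by
        gcongr
        refine (integral_abs_G_sub_G_rpow_le_of_le_two_mul (by positivity) hb (by linarith)
          (by linarith)).trans_eq ?_
        rw [add_sub_cancel_left, div_rpow (by positivity) hb.le, mul_rpow (by norm_num) hδ.le,
          show 4 * π * (4 * b) = 16 * π * b by ring, mul_rpow (by positivity) hb.le,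
          show (1 - 6 * q) / 2 = -(2 * q) + (1 - 2 * q) / 2 by ring, rpow_add hb, rpow_neg hb.le]
        field_simp
    _ = (9 ^ (2 * q) * (16 * π) ^ ((1 - 2 * q) / 2) / √(2 * q)) ^ (1 / q) * δ ^ 2 *
          b ^ (1 / (2 * q) - 3) := by
        rw [mul_rpow (by positivity) (by positivity), mul_rpow (x := δ ^ (2 * q)) (by positivity)
          (by positivity), ← rpow_mul hδ.le, ← rpow_mul hb.le,
          show 2 * q * (1 / q) = 2 by field_simp, rpow_two, mul_assoc]
        congr 3
        field_simp; ring

theorem heat_kernel_time_increment_L2q1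
    (q₁ : ℝ) (hq : 1 ≤ q₁) :
    ∃ C : ℝ, 0 < C ∧ ∀ t₁ t₂ : ℝ, 0 < t₁ → t₁ < t₂ →
      ∫ s in (0:ℝ)..t₁,
          (∫ x : ℝ, |G (t₂ - s) x - G (t₁ - s) x| ^ (2 * q₁)) ^ (1/q₁)
        ≤ C * (t₂ - t₁) ^ (1/(2*q₁)) := by
  obtain ⟨K₁, hK₁, hfar⟩ := exists_rpow_integral_abs_G_add_sub_G_le (q := q₁) (by linarith)
  obtain ⟨K₂, hK₂, hnear⟩ := exists_rpow_integral_abs_G_add_sub_G_le_of_le (q := q₁) (by linarith)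
  set α := 1 / (2 * q₁) - 1 with hα
  have hα₀ : -1 < α := by linarith [show 0 < 1 / (2 * q₁) by positivity]
  have hα₁ : α < 1 := by
    linarith [(div_le_one (by positivity : 0 < 2 * q₁)).2 (by linarith : 1 ≤ 2 * q₁)]
  refine ⟨K₁ / (α + 1) + K₂ / (1 - α),
    add_pos (div_pos hK₁ (by linarith)) (div_pos hK₂ (by linarith)), fun t₁ t₂ ht₁ ht ↦ ?_⟩
  set H : ℝ → ℝ := fun b ↦ (∫ x, |G (b + (t₂ - t₁)) x - G b x| ^ (2 * q₁)) ^ (1 / q₁)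
  have hH : ∀ s, (∫ x, |G (t₂ - s) x - G (t₁ - s) x| ^ (2 * q₁)) ^ (1 / q₁) = H (t₁ - s) :=
    fun s ↦ by simp only [H, sub_add_sub_cancel']
  simp_rw [hH]
  rw [intervalIntegral.integral_comp_sub_left H, sub_self, sub_zero,
    show 1 / (2 * q₁) = α + 1 by ring]
  refine intervalIntegral_le_of_le_rpow_of_le_rpow hα₀ hα₁ (sub_pos.2 ht) ht₁.le
    (fun b _ ↦ by positivity) (fun b hb ↦ hfar b _ hb (sub_pos.2 ht).le)
    (fun b hb ↦ (hnear b _ (sub_pos.2 ht) hb).trans_eq ?_)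
  rw [show 1 / (2 * q₁) - 3 = α - 2 by ring]
end
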